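/- arXiv:1211.5586 — 4 statements merged into one kernel-verified Lean document; each statement's English description precedes it below -/
import Mathlib

section
/- Let W̃ be the subgroup of GL(4,ℂ) generated by W, ν and τ. Every polynomial f ∈ ℂ[z_0,z_1,z_2,z_3] that is invariant under W̃ (i.e. f(gz) = f(z) for all g ∈ W̃) belongs to the subalgebra of ℂ[z_0,z_1,z_2,z_3] generated by F_1, F_3, F_4 and F_6. -/
open MvPolynomial

/-- The symmetric invariants `F_k = (1/6) Σ_{i<j} [(z_i - z_j)^{2k} + (z_i + z_j)^{2k}]`. -/
noncomputable def Fpoly (k : ℕ) : MvPolynomial (Fin 4) ℂ :=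
  C (6⁻¹ : ℂ) *
    ∑ i : Fin 4, ∑ j : Fin 4,
      if i < j then (X i - X j) ^ (2 * k) + (X i + X j) ^ (2 * k) else 0

/-- The group `W` of even-signed permutations of coordinates, as a set of matrices:
matrices of the maps `e_i ↦ ε_i e_{s(i)}` with `s ∈ S₄`, `ε_i = ±1`, `ε₀ε₁ε₂ε₃ = 1`. -/
def SignedPerm : Set (Matrix (Fin 4) (Fin 4) ℂ) :=
  { M | ∃ (s : Equiv.Perm (Fin 4)) (ε : Fin 4 → ℂ),
      (∀ i, ε i = 1 ∨ ε i = -1) ∧ ε 0 * ε 1 * ε 2 * ε 3 = 1 ∧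
      ∀ i j, M i j = if i = s j then ε j else 0 }

/-- The matrix `ν = diag(1,1,1,-1)`. -/
noncomputable def nuMat : Matrix (Fin 4) (Fin 4) ℂ :=
  Matrix.diagonal ![1, 1, 1, -1]

/-- The matrix `τ`. -/
noncomputable def tauMat : Matrix (Fin 4) (Fin 4) ℂ :=
  (2⁻¹ : ℂ) • Matrix.of
    ![![1, 1, 1, 1], ![1, 1, -1, -1], ![1, -1, -1, 1], ![1, -1, 1, -1]]

/-- A polynomial `f` is invariant under the linear map with matrix `M` if `f ∘ M = f`,
equivalently (over the infinite field `ℂ`) `f (M z) = f z` for all `z`. -/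
def InvUnder (M : Matrix (Fin 4) (Fin 4) ℂ) (f : MvPolynomial (Fin 4) ℂ) : Prop :=
  ∀ z : Fin 4 → ℂ, eval (M.mulVec z) f = eval z f

/-- The group `W̃`: the subgroup of `GL(4, ℂ)` generated by `W`, `ν` and `τ`. -/
noncomputable def tildeW : Subgroup (GL (Fin 4) ℂ) :=
  Subgroup.closure
    { g : GL (Fin 4) ℂ | (↑g : Matrix (Fin 4) (Fin 4) ℂ) ∈ SignedPerm ∨
        (↑g : Matrix (Fin 4) (Fin 4) ℂ) = nuMat ∨ (↑g : Matrix (Fin 4) (Fin 4) ℂ) = tauMat }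


/-!
Flipping the sign of one coordinate shows that every exponent of a `W̃`-invariant `f` is even, so
`f` is a polynomial in the `zᵢ²`; invariance under coordinate permutations makes it symmetric in
them, hence a polynomial in the elementary symmetric functions of the `zᵢ²`, and these are
polynomials in `F₁`, `F₃` and three quartic invariants `α₀, α₁, α₂`. Now `τ` and `ν` fix `F₁, F₃`
and act on `(α₀, α₁, α₂)` as the transpositions `(0 1)` and `(1 2)`, so averaging over `S₃` turns
`f` into a polynomial in `F₁`, `F₃` and the elementary symmetric functions of the `αᵢ`, which are
`0` and explicit polynomials in `F₁, F₃, F₄, F₆`.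

Both steps are one general fact: if algebra endomorphisms fixing `s` and `f` realise every
permutation of the generators `a`, then `f ∈ K[s, a]` already lies in `K[s, eₖ(a)]`.
-/

section Symmetrization

variable (K : Type*) {A σ : Type*} [CommSemiring K] [CommSemiring A] [Algebra K A]

def realizablePerms (s : Set A) (a : σ → A) (f : A) : Submonoid (Equiv.Perm σ) where
  carrier := {π | ∃ φ : A →ₐ[K] A, (∀ x ∈ s, φ x = x) ∧ (∀ i, φ (a i) = a (π i)) ∧ φ f = f}
  mul_mem' := by
    rintro π₁ π₂ ⟨φ₁, hs₁, ha₁, hf₁⟩ ⟨φ₂, hs₂, ha₂, hf₂⟩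
    exact ⟨φ₁.comp φ₂, fun x hx => by simp [hs₂ x hx, hs₁ x hx], fun i => by simp [ha₁, ha₂],
      by simp [hf₁, hf₂]⟩
  one_mem' := ⟨AlgHom.id K A, fun _ _ => rfl, fun _ => rfl, rfl⟩

variable {K}

theorem AlgHom.apply_aeval_adjoin {s : Set A} (φ : A →ₐ[K] A) (hφ : ∀ x ∈ s, φ x = x)
    (a : σ → A) (H : MvPolynomial σ (Algebra.adjoin K s)) :
    φ (aeval a H) = aeval (φ ∘ a) H := by
  have hB : (φ : A →+* A).comp (algebraMap (Algebra.adjoin K s) A) =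
      algebraMap (Algebra.adjoin K s) A :=
    RingHom.ext fun b => AlgHom.adjoin_le_equalizer φ (AlgHom.id K A) hφ b.2
  rw [aeval_def, aeval_def, ← RingHom.coe_coe φ, eval₂_comp_left, hB]

end Symmetrization

theorem exists_isSymmetric_aeval_eq {K R A σ : Type*} [Field K] [CharZero K] [CommRing R]
    [Algebra K R] [CommRing A] [Algebra R A] [Fintype σ] [DecidableEq σ] {a : σ → A}
    {H : MvPolynomial σ R} (hH : ∀ π : Equiv.Perm σ, aeval a (rename π H) = aeval a H) :
    ∃ Hs : MvPolynomial σ R, Hs.IsSymmetric ∧ aeval a Hs = aeval a H := by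
  set n := Fintype.card (Equiv.Perm σ)
  have hn : algebraMap K R (n : K)⁻¹ * n = 1 := by
    rw [← map_natCast (algebraMap K R), ← map_mul,
      inv_mul_cancel₀ (Nat.cast_ne_zero.2 Fintype.card_ne_zero), map_one]
  refine ⟨algebraMap K R (n : K)⁻¹ • ∑ π : Equiv.Perm σ, rename π H, fun τ => ?_, ?_⟩
  · rw [map_smul, map_sum]
    congr 1
    simp_rw [rename_rename]
    exact Fintype.sum_equiv (Equiv.mulLeft τ) _ _ fun π => rfl
  · rw [map_smul, map_sum, Finset.sum_congr rfl fun π _ => hH π, Finset.sum_const,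
      Finset.card_univ, nsmul_eq_mul, Algebra.smul_def, ← mul_assoc,
      ← map_natCast (algebraMap R A), ← map_mul, hn, map_one, one_mul]

theorem mem_adjoin_union_esymm {K A σ : Type*} [Field K] [CharZero K] [CommRing A]
    [Algebra K A] [Fintype σ] [DecidableEq σ] {s : Set A} {a : σ → A} {f : A}
    (hf : f ∈ Algebra.adjoin K (s ∪ Set.range a)) (hperm : realizablePerms K s a f = ⊤) :
    f ∈ Algebra.adjoin K
      (s ∪ Set.range fun k : Fin (Fintype.card σ) => aeval a (esymm σ K (k + 1))) := by
  rw [Algebra.adjoin_union_eq_adjoin_adjoin, Subalgebra.mem_restrictScalars,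
    Algebra.adjoin_range_eq_range_aeval] at hf ⊢
  obtain ⟨H, rfl⟩ := hf
  have hH (π : Equiv.Perm σ) : aeval a (rename π H) = aeval a H := by
    obtain ⟨φ, hs, ha, hφ⟩ : π ∈ realizablePerms K s a (aeval a H) := hperm ▸ Submonoid.mem_top π
    rw [aeval_rename, ← hφ, AlgHom.apply_aeval_adjoin φ hs, show φ ∘ a = a ∘ π from funext ha]
  obtain ⟨Hs, hsym, hHs⟩ := exists_isSymmetric_aeval_eq (K := K) hH
  obtain ⟨P, hP⟩ := esymmAlgHom_surjective (Algebra.adjoin K s) le_rfl ⟨Hs, hsym⟩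
  refine ⟨P, ?_⟩
  change aeval _ P = aeval a H
  rw [← hHs, show Hs = _ from congrArg Subtype.val hP.symm, esymmAlgHom_apply, comp_aeval_apply]
  simp_rw [← map_esymm σ K _ (algebraMap K (Algebra.adjoin K s)), aeval_map_algebraMap]

theorem coeff_aeval_C_mul_X {R σ : Type*} [CommSemiring R] (d : σ → R) (f : MvPolynomial σ R)
    (m : σ →₀ ℕ) :
    coeff m (aeval (fun j => C (d j) * X j) f) = (m.prod fun j e => d j ^ e) * coeff m f := by
  induction f using MvPolynomial.induction_on' with
  | monomial n c =>
    classical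
    have : aeval (fun j => C (d j) * X j) (monomial n c) =
        monomial n (c * n.prod fun j e => d j ^ e) := by
      simp [monomial_eq, mul_pow, Finsupp.prod_mul, map_finsuppProd]
      ring
    rw [this, coeff_monomial, coeff_monomial]
    split_ifs with h <;> simp [h, mul_comm]
  | add p q hp hq => rw [map_add, coeff_add, coeff_add, hp, hq, mul_add]

theorem mem_adjoin_range_X_sq {R σ : Type*} [CommRing R] [NoZeroDivisors R] [CharZero R]
    [DecidableEq σ] {f : MvPolynomial σ R}
    (hf : ∀ i, aeval (fun j => C (if j = i then -1 else 1) * X j) f = f) :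
    f ∈ Algebra.adjoin R (Set.range fun i => (X i ^ 2 : MvPolynomial σ R)) := by
  have heven : ∀ m ∈ f.support, ∀ i, Even (m i) := by
    intro m hm i
    by_contra hodd
    have h := congrArg (coeff m) (hf i)
    have hi : i ∈ m.support := Finsupp.mem_support_iff.2 fun h0 => hodd (h0 ▸ Even.zero)
    rw [coeff_aeval_C_mul_X] at h
    simp only [ite_pow, one_pow, Finsupp.prod_ite_eq', hi, if_true,
      (Nat.not_even_iff_odd.1 hodd).neg_one_pow, neg_one_mul, CharZero.neg_eq_self_iff] at h
    exact mem_support_iff.1 hm h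
  rw [← f.support_sum_monomial_coeff]
  refine Subalgebra.sum_mem _ fun m hm => ?_
  rw [monomial_eq]
  refine Subalgebra.mul_mem _ (Subalgebra.algebraMap_mem _ _) (Subalgebra.prod_mem _ fun i _ => ?_)
  obtain ⟨k, hk⟩ := heven m hm i
  simp only [hk, ← two_mul, pow_mul]
  exact Subalgebra.pow_mem _ (Algebra.subset_adjoin (Set.mem_range_self i)) k

theorem MvPolynomial.eval_aeval {σ τ R : Type*} [CommSemiring R] (z : τ → R)
    (g : σ → MvPolynomial τ R) (p : MvPolynomial σ R) :
    eval z (aeval g p) = aeval (fun i => eval z (g i)) p := by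
  induction p using MvPolynomial.induction_on <;> simp_all

section LinearSubstitution

variable {R σ : Type*} [CommSemiring R] [Fintype σ]

noncomputable def linearSubst (M : Matrix σ σ R) : MvPolynomial σ R →ₐ[R] MvPolynomial σ R :=
  aeval fun i => ∑ j, C (M i j) * X j

theorem eval_linearSubst (M : Matrix σ σ R) (f : MvPolynomial σ R) (z : σ → R) :
    eval z (linearSubst M f) = eval (M.mulVec z) f := by
  rw [linearSubst, eval_aeval]
  simp only [map_sum, map_mul, eval_C, eval_X]
  rfl

theorem linearSubst_diagonal [DecidableEq σ] (d : σ → R) :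
    linearSubst (Matrix.diagonal d) = aeval fun j => C (d j) * X j := by
  simp only [linearSubst]
  congr 1
  funext i
  simp [Matrix.diagonal_apply, apply_ite C, ite_mul]

theorem linearSubst_permMatrix [DecidableEq σ] (π : Equiv.Perm σ) :
    linearSubst (π.permMatrix R) = rename π :=
  algHom_ext fun i => by simp [linearSubst, PEquiv.toMatrix_apply]

end LinearSubstitution

theorem linearSubst_eq_self_of_invUnder {M : Matrix (Fin 4) (Fin 4) ℂ}
    {f : MvPolynomial (Fin 4) ℂ} (h : InvUnder M f) : linearSubst M f = f :=
  MvPolynomial.funext fun z => (eval_linearSubst M f z).trans (h z)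

noncomputable def tildeWMatrices : Submonoid (Matrix (Fin 4) (Fin 4) ℂ) :=
  tildeW.toSubmonoid.map (Units.coeHom _)

theorem mem_tildeWMatrices_of_mul_eq_one {M N : Matrix (Fin 4) (Fin 4) ℂ} (hMN : M * N = 1)
    (hM : M ∈ SignedPerm ∨ M = nuMat ∨ M = tauMat) : M ∈ tildeWMatrices :=
  ⟨⟨M, N, hMN, mul_eq_one_comm.1 hMN⟩, Subgroup.subset_closure hM, rfl⟩

theorem permMatrix_mem_tildeWMatrices (π : Equiv.Perm (Fin 4)) :
    π.permMatrix ℂ ∈ tildeWMatrices := by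
  refine mem_tildeWMatrices_of_mul_eq_one (N := π⁻¹.permMatrix ℂ)
    (by rw [← Matrix.permMatrix_mul, inv_mul_cancel, Matrix.permMatrix_one])
    (Or.inl ⟨π⁻¹, 1, fun _ => Or.inl rfl, by norm_num, fun i j => ?_⟩)
  simp [PEquiv.toMatrix_apply, Equiv.eq_symm_apply]

theorem diagonal_mul_self_of_sign {n R : Type*} [Fintype n] [DecidableEq n] [Ring R]
    {ε : n → R} (hε : ∀ i, ε i = 1 ∨ ε i = -1) : Matrix.diagonal ε * Matrix.diagonal ε = 1 := by
  rw [Matrix.diagonal_mul_diagonal, ← Matrix.diagonal_one]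
  congr 1
  funext i
  rcases hε i with h | h <;> simp [h]

theorem diagonal_mem_tildeWMatrices {ε : Fin 4 → ℂ} (hε : ∀ i, ε i = 1 ∨ ε i = -1)
    (hprod : ε 0 * ε 1 * ε 2 * ε 3 = 1) : Matrix.diagonal ε ∈ tildeWMatrices :=
  mem_tildeWMatrices_of_mul_eq_one (diagonal_mul_self_of_sign hε)
    (Or.inl ⟨1, ε, hε, hprod, fun i j => by by_cases h : i = j <;> simp [h]⟩)

theorem nuMat_eq_diagonal : nuMat = Matrix.diagonal fun j => if j = 3 then -1 else 1 := by
  rw [nuMat]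
  congr 1
  funext j
  fin_cases j <;> simp

theorem nuMat_mem_tildeWMatrices : nuMat ∈ tildeWMatrices :=
  mem_tildeWMatrices_of_mul_eq_one (N := nuMat)
    (nuMat_eq_diagonal ▸ diagonal_mul_self_of_sign fun j => by split_ifs <;> simp)
    (Or.inr (Or.inl rfl))

theorem tauMat_mem_tildeWMatrices : tauMat ∈ tildeWMatrices := by
  refine mem_tildeWMatrices_of_mul_eq_one (N := tauMat) ?_ (Or.inr (Or.inr rfl))
  ext i j
  fin_cases i <;> fin_cases j <;> simp [tauMat, Matrix.mul_apply, Fin.sum_univ_four] <;> norm_num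

theorem diagonal_signFlip_mem_tildeWMatrices (i : Fin 4) :
    Matrix.diagonal (fun j => if j = i then -1 else 1) ∈ tildeWMatrices := by
  have h : Matrix.diagonal (fun j => if j = i then -1 else 1) =
      Matrix.diagonal (fun j => (if j = i then -1 else 1) * if j = 3 then -1 else 1) * nuMat := by
    rw [nuMat_eq_diagonal, Matrix.diagonal_mul_diagonal]
    congr 1
    funext j
    split_ifs <;> norm_num
  rw [h]
  refine mul_mem (diagonal_mem_tildeWMatrices (fun j => ?_) ?_) nuMat_mem_tildeWMatrices
  · split_ifs <;> norm_num
  · fin_cases i <;> simp [Fin.ext_iff]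

/-- The three quartic `W`-invariants that `τ` and `ν` permute; they sum to zero. -/
noncomputable def alpha : Fin 3 → MvPolynomial (Fin 4) ℂ :=
  ![4 * psum (Fin 4) ℂ 4 - 2 * psum (Fin 4) ℂ 2 ^ 2,
    psum (Fin 4) ℂ 2 ^ 2 - 2 * psum (Fin 4) ℂ 4 + 24 * ∏ i, X i,
    psum (Fin 4) ℂ 2 ^ 2 - 2 * psum (Fin 4) ℂ 4 - 24 * ∏ i, X i]

theorem eval_Fpoly (k : ℕ) (z : Fin 4 → ℂ) :
    eval z (Fpoly k) = 6⁻¹ * ∑ i : Fin 4, ∑ j : Fin 4,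
      if i < j then (z i - z j) ^ (2 * k) + (z i + z j) ^ (2 * k) else 0 := by
  simp [Fpoly, apply_ite (eval z)]

theorem linearSubst_tauMat_alpha (i : Fin 3) :
    linearSubst tauMat (alpha i) = alpha (Equiv.swap 0 1 i) := by
  refine MvPolynomial.funext fun z => ?_
  rw [eval_linearSubst]
  fin_cases i <;>
    simp [alpha, psum, tauMat, dotProduct, Fin.sum_univ_four, Fin.prod_univ_four,
      Equiv.swap_apply_of_ne_of_ne] <;> ring

theorem linearSubst_nuMat_alpha (i : Fin 3) :
    linearSubst nuMat (alpha i) = alpha (Equiv.swap 1 2 i) := by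
  refine MvPolynomial.funext fun z => ?_
  rw [eval_linearSubst]
  fin_cases i <;>
    simp [alpha, psum, nuMat, Matrix.mulVec_diagonal, Fin.sum_univ_four, Fin.prod_univ_four,
      Equiv.swap_apply_of_ne_of_ne] <;> ring

theorem linearSubst_tauMat_Fpoly {k : ℕ} (hk : k = 1 ∨ k = 3) :
    linearSubst tauMat (Fpoly k) = Fpoly k := by
  refine MvPolynomial.funext fun z => ?_
  rw [eval_linearSubst]
  rcases hk with rfl | rfl <;>
    simp [eval_Fpoly, tauMat, dotProduct, Fin.sum_univ_four] <;> ring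

theorem linearSubst_nuMat_Fpoly (k : ℕ) : linearSubst nuMat (Fpoly k) = Fpoly k := by
  refine MvPolynomial.funext fun z => ?_
  rw [eval_linearSubst]
  simp [eval_Fpoly, nuMat, Matrix.mulVec_diagonal, Fin.sum_univ_four, ← sub_eq_add_neg]
  ring

theorem aeval_X_sq_esymm_one :
    aeval (fun i => X i ^ 2) (esymm (Fin 4) ℂ 1) = Fpoly 1 := by
  refine MvPolynomial.funext fun z => ?_
  rw [eval_aeval]
  simp [eval_Fpoly, Fin.sum_univ_four]
  ring

theorem aeval_X_sq_esymm_two :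
    aeval (fun i => X i ^ 2) (esymm (Fin 4) ℂ 2) =
    (8 : ℂ)⁻¹ • (2 * Fpoly 1 ^ 2 - alpha 0) := by
  refine MvPolynomial.funext fun z => ?_
  rw [eval_aeval]
  simp [aeval_esymm_eq_multiset_esymm, Multiset.esymm, Fin.univ_val_map,
    ← Multiset.cons_coe, Multiset.powersetCard_cons, Multiset.powersetCard_one, eval_Fpoly, alpha,
    psum, Fin.sum_univ_four, Fin.prod_univ_four]
  ring

theorem aeval_X_sq_esymm_three :
    aeval (fun i => X i ^ 2) (esymm (Fin 4) ℂ 3) =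
    (144 : ℂ)⁻¹ • (18 * Fpoly 1 ^ 3 - 3 * Fpoly 1 * alpha 0 - 12 * Fpoly 3) := by
  refine MvPolynomial.funext fun z => ?_
  rw [eval_aeval]
  simp [aeval_esymm_eq_multiset_esymm, Multiset.esymm, Fin.univ_val_map,
    ← Multiset.cons_coe, Multiset.powersetCard_cons, Multiset.powersetCard_one, eval_Fpoly, alpha,
    psum, Fin.sum_univ_four, Fin.prod_univ_four]
  ring

theorem aeval_X_sq_esymm_four :
    aeval (fun i => X i ^ 2) (esymm (Fin 4) ℂ 4) =
    (2304 : ℂ)⁻¹ • (2 * alpha 1 + alpha 0) ^ 2 := by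
  refine MvPolynomial.funext fun z => ?_
  rw [eval_aeval]
  simp [aeval_esymm_eq_multiset_esymm, Multiset.esymm, Fin.univ_val_map,
    ← Multiset.cons_coe, Multiset.powersetCard_cons, Multiset.powersetCard_one, alpha,
    psum, Fin.sum_univ_four, Fin.prod_univ_four]
  ring

theorem aeval_alpha_esymm_one :
    aeval alpha (esymm (Fin 3) ℂ 1) = 0 := by
  refine MvPolynomial.funext fun z => ?_
  rw [eval_aeval]
  simp [alpha, psum, Fin.sum_univ_three, Fin.sum_univ_four, Fin.prod_univ_four]
  ring

theorem aeval_alpha_esymm_two :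
    aeval alpha (esymm (Fin 3) ℂ 2) =
    (5 : ℂ)⁻¹ • (-36 * Fpoly 4 + 156 * Fpoly 1 * Fpoly 3 - 135 * Fpoly 1 ^ 4) := by
  refine MvPolynomial.funext fun z => ?_
  rw [eval_aeval]
  simp [aeval_esymm_eq_multiset_esymm, Multiset.esymm, Fin.univ_val_map,
    ← Multiset.cons_coe, Multiset.powersetCard_cons, Multiset.powersetCard_one, eval_Fpoly, alpha,
    psum, Fin.sum_univ_four, Fin.prod_univ_four]
  ring

theorem aeval_alpha_esymm_three :
    aeval alpha (esymm (Fin 3) ℂ 3) =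
    (45 : ℂ)⁻¹ • (-288 * Fpoly 6 + 732 * Fpoly 3 ^ 2 + 3924 * Fpoly 1 ^ 2 * Fpoly 4
      - 10164 * Fpoly 1 ^ 3 * Fpoly 3 + 5886 * Fpoly 1 ^ 6) := by
  refine MvPolynomial.funext fun z => ?_
  rw [eval_aeval]
  simp [aeval_esymm_eq_multiset_esymm, Multiset.esymm, Fin.univ_val_map,
    ← Multiset.cons_coe, Multiset.powersetCard_cons, Multiset.powersetCard_one, eval_Fpoly, alpha,
    psum, Fin.sum_univ_four, Fin.prod_univ_four]
  ring

theorem aeval_X_sq_esymm_mem (k : Fin (Fintype.card (Fin 4))) :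
    aeval (fun i => X i ^ 2) (esymm (Fin 4) ℂ (k + 1)) ∈
      Algebra.adjoin ℂ ({Fpoly 1, Fpoly 3} ∪ Set.range alpha) := by
  have hF1 : Fpoly 1 ∈ Algebra.adjoin ℂ ({Fpoly 1, Fpoly 3} ∪ Set.range alpha) :=
    Algebra.subset_adjoin (by simp)
  have hF3 : Fpoly 3 ∈ Algebra.adjoin ℂ ({Fpoly 1, Fpoly 3} ∪ Set.range alpha) :=
    Algebra.subset_adjoin (by simp)
  have halpha (i : Fin 3) : alpha i ∈ Algebra.adjoin ℂ ({Fpoly 1, Fpoly 3} ∪ Set.range alpha) :=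
    Algebra.subset_adjoin (by simp)
  fin_cases k <;>
    simp only [Nat.reduceAdd, zero_add, aeval_X_sq_esymm_one, aeval_X_sq_esymm_two,
      aeval_X_sq_esymm_three, aeval_X_sq_esymm_four] <;>
    aesop (add safe apply [Subalgebra.smul_mem, sub_mem, add_mem, pow_mem, mul_mem, ofNat_mem])

theorem aeval_alpha_esymm_mem (k : Fin (Fintype.card (Fin 3))) :
    aeval alpha (esymm (Fin 3) ℂ (k + 1)) ∈
      Algebra.adjoin ℂ {Fpoly 1, Fpoly 3, Fpoly 4, Fpoly 6} := by
  have hF (k : ℕ) (hk : k = 1 ∨ k = 3 ∨ k = 4 ∨ k = 6) :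
      Fpoly k ∈ Algebra.adjoin ℂ {Fpoly 1, Fpoly 3, Fpoly 4, Fpoly 6} :=
    Algebra.subset_adjoin (by rcases hk with rfl | rfl | rfl | rfl <;> simp)
  fin_cases k <;>
    simp only [Nat.reduceAdd, zero_add, aeval_alpha_esymm_one, aeval_alpha_esymm_two,
      aeval_alpha_esymm_three] <;>
    aesop (add safe apply [hF, Subalgebra.smul_mem, sub_mem, add_mem, neg_mem, pow_mem, mul_mem,
      ofNat_mem, zero_mem])

theorem mem_adjoin_X_sq_of_invUnder {f : MvPolynomial (Fin 4) ℂ}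
    (hf : ∀ M ∈ tildeWMatrices, InvUnder M f) :
    f ∈ Algebra.adjoin ℂ (Set.range fun i => (X i ^ 2 : MvPolynomial (Fin 4) ℂ)) :=
  mem_adjoin_range_X_sq fun i => by
    rw [← linearSubst_diagonal]
    exact linearSubst_eq_self_of_invUnder (hf _ (diagonal_signFlip_mem_tildeWMatrices i))

theorem realizablePerms_X_sq_eq_top {f : MvPolynomial (Fin 4) ℂ}
    (hf : ∀ M ∈ tildeWMatrices, InvUnder M f) :
    realizablePerms ℂ ∅ (fun i => (X i ^ 2 : MvPolynomial (Fin 4) ℂ)) f = ⊤ :=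
  eq_top_iff.2 fun π _ => ⟨rename π, by simp, by simp, by
    rw [← linearSubst_permMatrix]
    exact linearSubst_eq_self_of_invUnder (hf _ (permMatrix_mem_tildeWMatrices π))⟩

theorem realizablePerms_alpha_eq_top {f : MvPolynomial (Fin 4) ℂ}
    (hf : ∀ M ∈ tildeWMatrices, InvUnder M f) :
    realizablePerms ℂ {Fpoly 1, Fpoly 3} alpha f = ⊤ := by
  refine top_unique (Equiv.Perm.mclosure_swap_castSucc_succ 2 ▸ Submonoid.closure_le.2 ?_)
  rintro _ ⟨i, rfl⟩
  fin_cases i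
  · refine ⟨linearSubst tauMat, ?_, linearSubst_tauMat_alpha,
      linearSubst_eq_self_of_invUnder (hf _ tauMat_mem_tildeWMatrices)⟩
    rintro x (rfl | rfl)
    exacts [linearSubst_tauMat_Fpoly (Or.inl rfl), linearSubst_tauMat_Fpoly (Or.inr rfl)]
  · refine ⟨linearSubst nuMat, ?_, linearSubst_nuMat_alpha,
      linearSubst_eq_self_of_invUnder (hf _ nuMat_mem_tildeWMatrices)⟩
    rintro x (rfl | rfl) <;> exact linearSubst_nuMat_Fpoly _

/-- Every polynomial on `ℂ⁴` invariant under `W̃` is a polynomial in `F₁, F₃, F₄, F₆`. -/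
theorem symmetric_invariants_generated
    (f : MvPolynomial (Fin 4) ℂ)
    (hf : ∀ g ∈ tildeW, InvUnder (↑g : Matrix (Fin 4) (Fin 4) ℂ) f) :
    f ∈ Algebra.adjoin ℂ ({Fpoly 1, Fpoly 3, Fpoly 4, Fpoly 6} : Set (MvPolynomial (Fin 4) ℂ)) := by
  have hinv : ∀ M ∈ tildeWMatrices, InvUnder M f := by
    rintro _ ⟨g, hg, rfl⟩
    exact hf g hg
  have hsq := mem_adjoin_union_esymm (by simpa using mem_adjoin_X_sq_of_invUnder hinv)
    (realizablePerms_X_sq_eq_top hinv)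
  have halpha := mem_adjoin_union_esymm
    (Algebra.adjoin_le (by simpa [Set.range_subset_iff] using aeval_X_sq_esymm_mem) hsq)
    (realizablePerms_alpha_eq_top hinv)
  refine Algebra.adjoin_le (Set.union_subset ?_ (Set.range_subset_iff.2 aeval_alpha_esymm_mem))
    halpha
  rintro x (rfl | rfl) <;> exact Algebra.subset_adjoin (by simp)
end

section
/- If f ∈ ℂ[z_0,z_1,z_2,z_3] is invariant under W (f(sz) = f(z) for all s ∈ W) and f(z) = 0 for every z ∈ ℂ⁴ with z_i = z_j or z_i = −z_j for some i ≠ j, then f is divisible by Δ² in ℂ[z_0,z_1,z_2,z_3], where Δ = ∏_{0≤i<j≤3}(z_i−z_j)(z_i+z_j). -/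
open MvPolynomial

/-- The polynomial `Δ = ∏_{0 ≤ i < j ≤ 3} (z_i - z_j)(z_i + z_j)`. -/
noncomputable def DeltaPoly : MvPolynomial (Fin 4) ℂ :=
  ∏ i : Fin 4, ∏ j : Fin 4, if i < j then (X i - X j) * (X i + X j) else 1

/-
A polynomial vanishing on the hyperplane `z_a = c z_b` is divisible by `ℓ = X_a - c X_b`, say
`f = ℓ h`. For `c = ±1` the reflection `r` of `W` exchanging `z_a` and `c z_b` fixes `f` and
negates `ℓ`, so it negates `h`; as `r` fixes the hyperplane pointwise, `h ≡ r h = -h` modulo `ℓ`,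
hence `ℓ ∣ h` and `ℓ² ∣ f`. The twelve forms `X_i ± X_j` (`i < j`) are pairwise non-associate
irreducibles, so the product of their squares, `Δ²`, divides `f`.
-/

namespace MvPolynomial

variable {σ R : Type*} [CommRing R]

theorem dvd_bind₁_sub_self {w : σ → MvPolynomial σ R} {ℓ : MvPolynomial σ R}
    (hw : ∀ i, ℓ ∣ w i - X i) (p : MvPolynomial σ R) : ℓ ∣ bind₁ w p - p := by
  induction p using MvPolynomial.induction_on with
  | C r => simp
  | add p q hp hq => simpa [add_sub_add_comm] using dvd_add hp hq
  | mul_X p i hp =>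
    have key : bind₁ w (p * X i) - p * X i = (bind₁ w p - p) * w i + p * (w i - X i) := by
      simp only [map_mul, bind₁_X_right]; ring
    exact key ▸ dvd_add (dvd_mul_of_dvd_left hp _) (dvd_mul_of_dvd_right (hw i) _)

theorem eval_bind₁ (z : σ → R) (w : σ → MvPolynomial σ R) (p : MvPolynomial σ R) :
    eval z (bind₁ w p) = eval (fun i => eval z (w i)) p := by
  simpa only [← coe_aeval_eq_eval, RingHom.coe_coe] using aeval_bind₁ z w p

theorem isRelPrime_of_eval_eq_zero {p q : MvPolynomial σ R} (hp : Irreducible p) (z : σ → R)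
    (hpz : eval z p = 0) (hqz : eval z q ≠ 0) : IsRelPrime p q :=
  hp.isRelPrime_iff_not_dvd.2 fun ⟨r, hr⟩ => hqz (by simp [hr, hpz])

theorem irreducible_X_sub_C_mul_X [IsDomain R] {a b : σ} (hab : a ≠ b) (c : R) :
    Irreducible (X a - C c * X b : MvPolynomial σ R) := by
  classical
  have hvars : a ∉ (-(C c * X b) : MvPolynomial σ R).vars := fun ha => by
    have := vars_mul (C c) (X b : MvPolynomial σ R) (vars_neg (C c * X b) ▸ ha)
    simp [vars_C, vars_X, hab] at this
  simpa [sub_eq_add_neg] using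
    irreducible_mul_X_add 1 _ a one_ne_zero (by simp) hvars isRelPrime_one_left

theorem irreducible_X_sub_X [IsDomain R] {a b : σ} (hab : a ≠ b) :
    Irreducible (X a - X b : MvPolynomial σ R) := by
  simpa using irreducible_X_sub_C_mul_X (R := R) hab 1

theorem irreducible_X_add_X [IsDomain R] {a b : σ} (hab : a ≠ b) :
    Irreducible (X a + X b : MvPolynomial σ R) := by
  simpa using irreducible_X_sub_C_mul_X (R := R) hab (-1)

theorem X_sub_C_mul_X_dvd_of_eval_eq_zero [IsDomain R] [Infinite R] [DecidableEq σ] {a b : σ}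
    (hab : a ≠ b) (c : R) {p : MvPolynomial σ R}
    (hp : ∀ z : σ → R, z a = c * z b → eval z p = 0) : X a - C c * X b ∣ p := by
  set w := Function.update X a (C c * X b)
  have hw : ∀ i, X a - C c * X b ∣ w i - X i := fun i => by
    rcases eq_or_ne i a with rfl | hi
    · exact ⟨-1, by simp [w]⟩
    · simp [w, hi]
  have hproj : bind₁ w p = 0 := funext fun z => by
    rw [eval_bind₁, map_zero]
    apply hp
    simp [w, hab.symm]
  simpa [hproj] using dvd_bind₁_sub_self hw p

theorem isRelPrime_X_sub_X_X_add_X {K : Type*} [Field K] [NeZero (2 : K)] {i j : σ}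
    (hij : i ≠ j) : IsRelPrime (X i - X j : MvPolynomial σ K) (X i + X j) :=
  isRelPrime_of_eval_eq_zero (irreducible_X_sub_X hij) 1 (by simp)
    (by simp [one_add_one_eq_two, NeZero.ne])

theorem isRelPrime_X_sub_X_mul_X_add_X {K : Type*} [LinearOrder σ] [Field K] {i j k l : σ}
    (hij : i < j) (hkl : k < l) (hne : (i, j) ≠ (k, l)) :
    IsRelPrime ((X i - X j) * (X i + X j) : MvPolynomial σ K) ((X k - X l) * (X k + X l)) := by
  obtain ⟨m, hmi, hmj, hm⟩ : ∃ m, m ≠ i ∧ m ≠ j ∧ (m = k ∨ m = l) := by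
    have : (k ≠ i ∧ k ≠ j) ∨ (l ≠ i ∧ l ≠ j) := by grind
    rcases this with h | h
    exacts [⟨k, h.1, h.2, .inl rfl⟩, ⟨l, h.1, h.2, .inr rfl⟩]
  have hz : eval (Pi.single m 1) ((X k - X l) * (X k + X l) : MvPolynomial σ K) ≠ 0 := by
    rcases hm with rfl | rfl <;> simp [hkl.ne, hkl.ne']
  exact (isRelPrime_of_eval_eq_zero (irreducible_X_sub_X hij.ne) _ (by simp [hmi, hmj]) hz).mul_left
    (isRelPrime_of_eval_eq_zero (irreducible_X_add_X hij.ne) _ (by simp [hmi, hmj]) hz)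

end MvPolynomial

theorem sq_dvd_of_dvd_of_map_eq_self {R : Type*} [CommRing R] [IsDomain R] (h2 : IsUnit (2 : R))
    (φ : R →+* R) {ℓ f : R} (hℓ : ℓ ≠ 0) (hφℓ : φ ℓ = -ℓ) (hφ : ∀ g, ℓ ∣ φ g - g)
    (hφf : φ f = f) (hf : ℓ ∣ f) : ℓ ^ 2 ∣ f := by
  obtain ⟨h, rfl⟩ := hf
  have hφh : φ h = -h := by
    refine mul_left_cancel₀ hℓ ?_
    rw [map_mul, hφℓ] at hφf
    linear_combination -hφf
  have : ℓ ∣ 2 * h := by simpa [hφh, ← two_mul, ← neg_mul] using (hφ h).neg_right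
  exact (pow_two ℓ).symm ▸ mul_dvd_mul_left ℓ ((h2.dvd_mul_left).1 this)

theorem mulVec_of_ite_perm {σ R : Type*} [Fintype σ] [DecidableEq σ] [CommSemiring R]
    (s : Equiv.Perm σ) (ε : σ → R) (z : σ → R) :
    (Matrix.of fun i j => if i = s j then ε j else 0).mulVec z =
      fun i => ε (s.symm i) * z (s.symm i) := by
  ext i
  simp [Matrix.mulVec, dotProduct, ite_mul, ← Equiv.symm_apply_eq]

section SignedPermutation

variable {σ R : Type*}

noncomputable def signedPermSubst [CommSemiring R] (s : Equiv.Perm σ) (ε : σ → R) :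
    σ → MvPolynomial σ R :=
  fun i => C (ε (s.symm i)) * X (s.symm i)

variable [DecidableEq σ] [CommRing R] {a b : σ} {c : R}

def swapSign (a b : σ) (c : R) : σ → R :=
  fun k => if k = a ∨ k = b then c else 1

theorem prod_swapSign [Fintype σ] (hab : a ≠ b) : ∏ k, swapSign a b c k = c ^ 2 := by
  have hmem : ∀ k, (k = a ∨ k = b) ↔ k ∈ ({a, b} : Finset σ) := by simp
  simp only [swapSign, hmem, Finset.prod_ite_mem, Finset.univ_inter, Finset.prod_const,
    Finset.card_pair hab]

/-- The reflection of `W` in the hyperplane `z_a = c z_b`, as a substitution of variables. -/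
noncomputable def reflectSubst (a b : σ) (c : R) : σ → MvPolynomial σ R :=
  fun k => if k = a then C c * X b else if k = b then C c * X a else X k

theorem signedPermSubst_swap_swapSign (hab : a ≠ b) (c : R) :
    signedPermSubst (Equiv.swap a b) (swapSign a b c) = reflectSubst a b c := by
  ext1 k
  rcases eq_or_ne k a with rfl | hka
  · simp [signedPermSubst, swapSign, reflectSubst]
  rcases eq_or_ne k b with rfl | hkb
  · simp [signedPermSubst, swapSign, reflectSubst, hka]
  · simp [signedPermSubst, swapSign, reflectSubst, hka, hkb, Equiv.swap_apply_of_ne_of_ne]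

theorem bind₁_reflectSubst_X_sub (hc : c * c = 1) (hab : a ≠ b) :
    bind₁ (reflectSubst a b c) (X a - C c * X b) = -(X a - C c * X b) := by
  have hC : (C c : MvPolynomial σ R) * C c = 1 := by rw [← C_mul, hc, C_1]
  simp only [reflectSubst, map_sub, map_mul, bind₁_X_right, bind₁_C_right, if_true,
    if_neg hab.symm]
  linear_combination (-X a : MvPolynomial σ R) * hC

theorem X_sub_C_mul_X_dvd_reflectSubst_sub_X (hc : c * c = 1) (k : σ) :
    X a - C c * X b ∣ reflectSubst a b c k - X k := by
  have hC : (C c : MvPolynomial σ R) * C c = 1 := by rw [← C_mul, hc, C_1]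
  unfold reflectSubst
  split_ifs with hka hkb
  · exact ⟨-1, by rw [hka]; ring⟩
  · exact ⟨C c, by rw [hkb]; linear_combination (X b : MvPolynomial σ R) * hC⟩
  · simp

end SignedPermutation

def IsSignedPermInvariant (f : MvPolynomial (Fin 4) ℂ) : Prop :=
  ∀ M ∈ SignedPerm, ∀ z : Fin 4 → ℂ, eval (M.mulVec z) f = eval z f

section Invariant

variable {f : MvPolynomial (Fin 4) ℂ}

theorem bind₁_signedPermSubst_eq_self (hinv : IsSignedPermInvariant f) (s : Equiv.Perm (Fin 4))
    (ε : Fin 4 → ℂ) (hε : ∀ i, ε i = 1 ∨ ε i = -1) (hprod : ε 0 * ε 1 * ε 2 * ε 3 = 1) :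
    bind₁ (signedPermSubst s ε) f = f :=
  funext fun z => by
    have hM : Matrix.of (fun i j => if i = s j then ε j else 0) ∈ SignedPerm :=
      ⟨s, ε, hε, hprod, fun _ _ => rfl⟩
    rw [eval_bind₁, ← hinv _ hM z, mulVec_of_ite_perm]
    simp [signedPermSubst]

theorem bind₁_reflectSubst_eq_self (hinv : IsSignedPermInvariant f) {a b : Fin 4} (hab : a ≠ b)
    {c : ℂ} (hc : c = 1 ∨ c = -1) : bind₁ (reflectSubst a b c) f = f := by
  rw [← signedPermSubst_swap_swapSign hab]
  refine bind₁_signedPermSubst_eq_self hinv _ _ (fun k => ?_) ?_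
  · unfold swapSign
    split_ifs
    exacts [hc, .inl rfl]
  · rw [← Fin.prod_univ_four, prod_swapSign hab]
    rcases hc with rfl | rfl <;> norm_num

theorem sq_dvd_of_invariant (hinv : IsSignedPermInvariant f) {a b : Fin 4} (hab : a ≠ b) {c : ℂ}
    (hc : c = 1 ∨ c = -1) (hvan : ∀ z : Fin 4 → ℂ, z a = c * z b → eval z f = 0) :
    (X a - C c * X b) ^ 2 ∣ f := by
  have hcc : c * c = 1 := by rcases hc with rfl | rfl <;> norm_num
  have h2 : IsUnit (2 : MvPolynomial (Fin 4) ℂ) := by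
    simpa only [map_ofNat] using (IsUnit.mk0 (2 : ℂ) two_ne_zero).map (C : ℂ →+* _)
  exact sq_dvd_of_dvd_of_map_eq_self h2 (bind₁ (reflectSubst a b c)).toRingHom
    (irreducible_X_sub_C_mul_X hab c).ne_zero (bind₁_reflectSubst_X_sub hcc hab)
    (dvd_bind₁_sub_self (X_sub_C_mul_X_dvd_reflectSubst_sub_X hcc))
    (bind₁_reflectSubst_eq_self hinv hab hc) (X_sub_C_mul_X_dvd_of_eval_eq_zero hab c hvan)

theorem sq_X_sub_X_mul_X_add_X_dvd_of_invariant (hinv : IsSignedPermInvariant f)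
    (hvan : ∀ z : Fin 4 → ℂ, (∃ i j : Fin 4, i ≠ j ∧ (z i = z j ∨ z i = -z j)) → eval z f = 0)
    {i j : Fin 4} (hij : i ≠ j) : ((X i - X j) * (X i + X j)) ^ 2 ∣ f := by
  have hsub := sq_dvd_of_invariant hinv hij (.inl rfl) fun z hz =>
    hvan z ⟨i, j, hij, .inl (by simpa using hz)⟩
  have hadd := sq_dvd_of_invariant hinv hij (.inr rfl) fun z hz =>
    hvan z ⟨i, j, hij, .inr (by simpa using hz)⟩
  simp only [map_one, one_mul, map_neg, neg_mul, sub_neg_eq_add] at hsub hadd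
  rw [mul_pow]
  exact (isRelPrime_X_sub_X_X_add_X hij).pow.mul_dvd hsub hadd

end Invariant

theorem DeltaPoly_sq_eq_prod : DeltaPoly ^ 2 = ∏ p : Fin 4 × Fin 4,
    (if p.1 < p.2 then (X p.1 - X p.2) * (X p.1 + X p.2) else 1) ^ 2 := by
  simp only [DeltaPoly, Fintype.prod_prod_type, Finset.prod_pow]

/-- If `f` is `W`-invariant and vanishes on `{z : z_i = ±z_j for some i ≠ j}`,
then `Δ²` divides `f`. -/
theorem invariant_vanishing_divisible_by_Delta_sq
    (f : MvPolynomial (Fin 4) ℂ)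
    (hinv : ∀ M ∈ SignedPerm, ∀ z : Fin 4 → ℂ, eval (M.mulVec z) f = eval z f)
    (hvan : ∀ z : Fin 4 → ℂ, (∃ i j : Fin 4, i ≠ j ∧ (z i = z j ∨ z i = -z j)) →
      eval z f = 0) :
    DeltaPoly ^ 2 ∣ f := by
  rw [DeltaPoly_sq_eq_prod]
  refine Fintype.prod_dvd_of_isRelPrime (fun p q hpq => IsRelPrime.pow ?_) (fun p => ?_)
  · split_ifs with hp hq hq
    exacts [isRelPrime_X_sub_X_mul_X_add_X hp hq hpq, isRelPrime_one_right, isRelPrime_one_left,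
      isRelPrime_one_left]
  · split_ifs with hp
    · exact sq_X_sub_X_mul_X_add_X_dvd_of_invariant hinv hvan hp.ne
    · rw [one_pow]
      exact one_dvd f
end

section
/- The polynomial γ(z) = ∏_{0≤i<j≤3}(z_i−z_j)²(z_i+z_j)² ∈ ℂ[z_0,z_1,z_2,z_3] is invariant under every element of W, under ν, and under τ (hence under the group W̃ generated by W, ν and τ). -/
open MvPolynomial

/-- The polynomial `γ = ∏_{0 ≤ i < j ≤ 3} (z_i - z_j)²(z_i + z_j)²`. -/
noncomputable def gammaPoly : MvPolynomial (Fin 4) ℂ :=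
  ∏ i : Fin 4, ∏ j : Fin 4, if i < j then (X i - X j) ^ 2 * (X i + X j) ^ 2 else 1


set_option maxRecDepth 10000 in
/-- auxiliary: an evaluation-level version of `γ` as a product over ordered pairs. -/
private def Pgam (z : Fin 4 → ℂ) : ℂ :=
  ∏ i : Fin 4, ∏ j : Fin 4, if i ≠ j then z i ^ 2 - z j ^ 2 else 1

set_option maxRecDepth 10000 in
private theorem eval_gammaPoly (z : Fin 4 → ℂ) : eval z gammaPoly = Pgam z := by
  simp only [gammaPoly, Pgam, Fin.prod_univ_four, Fin.reduceLT, Fin.reduceEq, if_true, if_false,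
    ne_eq, not_true, not_false_iff, ite_true, ite_false, map_mul, map_pow, map_sub, map_add,
    eval_X, map_one, mul_one, one_mul]
  ring

private theorem Pgam_reindex (z : Fin 4 → ℂ) (σ : Equiv.Perm (Fin 4)) (c : Fin 4 → ℂ)
    (hc : ∀ i, c i ^ 2 = 1) : Pgam (fun i => c i * z (σ i)) = Pgam z := by
  have h1 : Pgam (fun i => c i * z (σ i)) = ∏ i : Fin 4, ∏ j : Fin 4,
      (if σ i ≠ σ j then z (σ i) ^ 2 - z (σ j) ^ 2 else 1) := by
    apply Finset.prod_congr rfl; intro i _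
    apply Finset.prod_congr rfl; intro j _
    rw [mul_pow, mul_pow, hc i, hc j, one_mul, one_mul]
    congr 1
    · simp [eq_iff_iff, σ.injective.ne_iff]
  rw [h1, Pgam]
  rw [← Equiv.prod_comp σ (fun i => ∏ j : Fin 4, if i ≠ j then z i ^ 2 - z j ^ 2 else 1)]
  apply Finset.prod_congr rfl; intro i _
  exact (Equiv.prod_comp σ (fun j => if σ i ≠ j then z (σ i) ^ 2 - z j ^ 2 else 1)).symm ▸ rfl

private theorem signedPerm_inv : ∀ M ∈ SignedPerm, InvUnder M gammaPoly := by
  rintro M ⟨s, ε, hε, -, hM⟩ z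
  have hmv : M.mulVec z = fun i => ε (s.symm i) * z (s.symm i) := by
    funext i
    rw [Matrix.mulVec, dotProduct]
    rw [Finset.sum_eq_single (s.symm i)]
    · rw [hM]; simp
    · intro j _ hj
      rw [hM]
      have : i ≠ s j := fun h => hj (by simp [h])
      simp [this]
    · simp
  rw [eval_gammaPoly, eval_gammaPoly, hmv]
  exact Pgam_reindex z s.symm (fun i => ε (s.symm i)) (fun i => by
    rcases hε (s.symm i) with h | h <;> simp only [h] <;> ring)

private theorem nu_inv : InvUnder nuMat gammaPoly := by
  intro z
  rw [eval_gammaPoly, eval_gammaPoly]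
  have h : nuMat.mulVec z = ![z 0, z 1, z 2, -(z 3)] := by
    funext i
    fin_cases i <;>
      simp [nuMat, Matrix.mulVec, dotProduct, Fin.sum_univ_four, Matrix.diagonal]
  rw [h]
  simp only [Pgam, Fin.prod_univ_four, Fin.reduceEq, ne_eq, not_true, not_false_iff,
    ite_true, ite_false, Matrix.cons_val_zero, Matrix.cons_val_one, Matrix.head_cons,
    Matrix.cons_val_two, Matrix.tail_cons, Matrix.cons_val_three]
  ring

private theorem tau_inv : InvUnder tauMat gammaPoly := by
  intro z
  rw [eval_gammaPoly, eval_gammaPoly]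
  have h : tauMat.mulVec z = ![2⁻¹*(z 0 + z 1 + z 2 + z 3), 2⁻¹*(z 0 + z 1 - z 2 - z 3),
      2⁻¹*(z 0 - z 1 - z 2 + z 3), 2⁻¹*(z 0 - z 1 + z 2 - z 3)] := by
    funext i
    fin_cases i <;>
      (simp [tauMat, Matrix.mulVec, dotProduct, Fin.sum_univ_four]; ring)
  rw [h]
  simp only [Pgam, Fin.prod_univ_four, Fin.reduceEq, ne_eq, not_true, not_false_iff,
    ite_true, ite_false, Matrix.cons_val_zero, Matrix.cons_val_one, Matrix.head_cons,
    Matrix.cons_val_two, Matrix.tail_cons, Matrix.cons_val_three]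
  ring

private theorem closure_inv (f : MvPolynomial (Fin 4) ℂ) (S : Set (GL (Fin 4) ℂ))
    (hS : ∀ g ∈ S, InvUnder (↑g : Matrix (Fin 4) (Fin 4) ℂ) f) :
    ∀ g ∈ Subgroup.closure S, InvUnder (↑g : Matrix (Fin 4) (Fin 4) ℂ) f := by
  intro g hg
  induction hg using Subgroup.closure_induction with
  | mem x hx => exact hS x hx
  | one => intro z; simp
  | mul x y hx hy ihx ihy =>
      intro z
      have h : ((x * y : GL (Fin 4) ℂ) : Matrix (Fin 4) (Fin 4) ℂ) =
          (↑x : Matrix (Fin 4) (Fin 4) ℂ) * (↑y : Matrix (Fin 4) (Fin 4) ℂ) :=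
        Units.val_mul x y
      rw [h, ← Matrix.mulVec_mulVec, ihx, ihy]
  | inv x hx ih =>
      intro z
      have h2 := ih ((↑(x⁻¹) : Matrix (Fin 4) (Fin 4) ℂ).mulVec z)
      rw [Matrix.mulVec_mulVec, ← Units.val_mul, mul_inv_cancel] at h2
      simpa using h2.symm

/-- `γ` is invariant under every element of `W`, under `ν`, and under `τ` — hence under
the group `W̃` generated by them. -/
theorem gammaPoly_invariant :
    (∀ M ∈ SignedPerm, InvUnder M gammaPoly) ∧
    InvUnder nuMat gammaPoly ∧
    InvUnder tauMat gammaPoly ∧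
    (∀ g ∈ tildeW, InvUnder (↑g : Matrix (Fin 4) (Fin 4) ℂ) gammaPoly) := by
  refine ⟨signedPerm_inv, nu_inv, tau_inv, ?_⟩
  apply closure_inv
  rintro g (hg | hg | hg)
  · exact signedPerm_inv _ hg
  · rw [hg]; exact nu_inv
  · rw [hg]; exact tau_inv
end

section
/- Let n ≥ 1 and let γ ∈ ℂ[x_1,…,x_n] be an irreducible polynomial. If f ∈ ℂ[x_1,…,x_n] satisfies f(x) ≠ 0 for every x ∈ ℂⁿ with γ(x) ≠ 0, then there exist c ∈ ℂ, c ≠ 0, and a natural number r such that f = c·γ^r. -/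
open MvPolynomial

/-! By the Nullstellensatz, `γ` vanishes on the zero set of `f`, so `f ∣ γ ^ m` for some `m`.
Since `γ` is prime, `f` is associated to a power of `γ`, and the units of `ℂ[x₁,…,xₙ]` are
the nonzero constants. -/

namespace MvPolynomial

theorem exists_dvd_pow_of_forall_eval_eq_zero {k σ : Type*} [Field k] [IsAlgClosed k]
    [Finite σ] {f g : MvPolynomial σ k} (h : ∀ x : σ → k, eval x f = 0 → eval x g = 0) :
    ∃ m : ℕ, f ∣ g ^ m := by
  have hg : g ∈ (Ideal.span {f}).radical := by
    rw [← vanishingIdeal_zeroLocus_eq_radical (K := k), zeroLocus_span]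
    intro x hx
    exact h x (hx f rfl)
  obtain ⟨m, hm⟩ := hg
  exact ⟨m, Ideal.mem_span_singleton.mp hm⟩

theorem exists_eq_C_mul_pow_of_dvd_prime_pow {K σ : Type*} [Field K]
    {p f : MvPolynomial σ K} (hp : Prime p) {m : ℕ} (hf : f ∣ p ^ m) :
    ∃ (c : K) (r : ℕ), c ≠ 0 ∧ f = C c * p ^ r := by
  obtain ⟨r, -, u, hu⟩ := (dvd_prime_pow hp m).mp hf
  obtain ⟨c, hc, hcu⟩ := isUnit_iff_eq_C_of_isReduced.mp (u⁻¹).isUnit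
  refine ⟨c, r, hc.ne_zero, ?_⟩
  rw [← hcu, ← hu, mul_comm, Units.mul_inv_cancel_right]

end MvPolynomial

theorem nonvanishing_off_irreducible_hypersurface_general
    (n : ℕ)
    (γ f : MvPolynomial (Fin n) ℂ)
    (hγ : Irreducible γ)
    (hf : ∀ x : Fin n → ℂ, eval x γ ≠ 0 → eval x f ≠ 0) :
    ∃ (c : ℂ) (r : ℕ), c ≠ 0 ∧ f = C c * γ ^ r := by
  obtain ⟨m, hm⟩ : ∃ m : ℕ, f ∣ γ ^ m :=
    exists_dvd_pow_of_forall_eval_eq_zero fun x hfx => not_imp_not.mp (hf x) hfx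
  exact exists_eq_C_mul_pow_of_dvd_prime_pow hγ.prime hm

/-- If `γ ∈ ℂ[x₁,…,xₙ]` is irreducible and `f` is a polynomial that is nonvanishing at
every point where `γ` is nonvanishing, then `f = c·γ^r` for some `c ≠ 0` and `r ∈ ℕ`. -/
theorem nonvanishing_off_irreducible_hypersurface
    (n : ℕ) (hn : 1 ≤ n)
    (γ f : MvPolynomial (Fin n) ℂ)
    (hγ : Irreducible γ)
    (hf : ∀ x : Fin n → ℂ, eval x γ ≠ 0 → eval x f ≠ 0) :
    ∃ (c : ℂ) (r : ℕ), c ≠ 0 ∧ f = C c * γ ^ r :=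
  nonvanishing_off_irreducible_hypersurface_general n γ f hγ hf
end
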